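/- Fix k ≥ 0 and let s_i^t denote the left Weyl group action on the ring R_∞ = Γ[z,t] (s_i^t for i ≥ 1 swaps t_i and t_{i+1}; s_0^t sends t_1 to -t_1 and Q_r(x_1,x_2,...) to Q_r(-t_1,x_1,x_2,...)). Then: (a) s_i^t(ϑ_r^{(l)}) = ϑ_r^{(l)} whenever l ≠ ±i; (b) s_i^t(ϑ_r^{(i)}) = ϑ_r^{(i-1)} − t_{i+1}·ϑ_{r-1}^{(i-1)} for i ≥ 0; (c) s_i^t(ϑ_r^{(-i)}) = ϑ_r^{(-i-1)} + t_i·ϑ_{r-1}^{(-i-1)} for i > 0. -/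

import Mathlib

/-!
Statement 3: Fix `k ≥ 0` and let `s_i^t` denote the left Weyl group action on `R_∞ = Γ[z,t]`
(`s_i^t` for `i ≥ 1` swaps `t_i` and `t_{i+1}`; `s_0^t` sends `t_1 ↦ -t_1` and
`Q_r(x_1,x_2,…) ↦ Q_r(-t_1,x_1,x_2,…)`).  Then:
(a) `s_i^t(ϑ_r^{(l)}) = ϑ_r^{(l)}` whenever `l ≠ ±i`;
(b) `s_i^t(ϑ_r^{(i)}) = ϑ_r^{(i-1)} − t_{i+1}·ϑ_{r-1}^{(i-1)}` for `i ≥ 0`;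
(c) `s_i^t(ϑ_r^{(-i)}) = ϑ_r^{(-i-1)} + t_i·ϑ_{r-1}^{(-i-1)}` for `i > 0`.

We realize the double theta polynomials by their generating functions
`f_l(u) = ∏_{i≥1}(1+x_i u)/(1-x_i u)·∏_{i=1}^k(1+z_i u)·∏_{i=1}^l(1-t_i u)` (with factors
`(1+t_i u)^{-1}` for negative superscript), universally over every commutative ring, every
number `N` of (possibly nonzero) `x`-variables and all values of the variables
(`x i, z i, t i` standing for `x_{i+1}, z_{i+1}, t_{i+1}`).  The action of `s_i^t` on a theta
polynomial is the corresponding substitution of the variable sequences: a swap of two `t`'s for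
`i ≥ 1`, and for `i = 0` the substitution `t_1 ↦ -t_1` together with prepending the variable
`-t_1` to the `x`-sequence. -/

open Finset

noncomputable section

variable {R : Type*} [CommRing R]

/-- The power series `(1 - a u)⁻¹ = ∑_n aⁿ uⁿ`. -/
def geomSeries (a : R) : PowerSeries R := PowerSeries.mk fun n => a ^ n

/-- The generating function `f_l(u)` of the double theta polynomials `_kϑ_r^{(l)}`. -/
def thetaGF (k N : ℕ) (x z t : ℕ → R) (l : ℤ) : PowerSeries R :=
  (∏ i ∈ range N, ((1 + PowerSeries.C (R := R) (x i) * PowerSeries.X) * geomSeries (x i))) *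
    (∏ i ∈ range k, (1 + PowerSeries.C (R := R) (z i) * PowerSeries.X)) *
    (if 0 ≤ l then ∏ i ∈ range l.toNat, (1 - PowerSeries.C (R := R) (t i) * PowerSeries.X)
     else ∏ i ∈ range (-l).toNat, geomSeries (-(t i)))

/-- The double theta polynomial `_kϑ_r^{(l)}(x,z|t)`; it vanishes for `r < 0`. -/
def theta (k N : ℕ) (x z t : ℕ → R) (l r : ℤ) : R :=
  if r < 0 then 0 else PowerSeries.coeff (R := R) r.toNat (thetaGF k N x z t l)

/-- The image `s_i^t(ϑ_r^{(l)})` of a double theta polynomial under the left Weyl group action: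
for `i ≥ 1` the variables `t_i` and `t_{i+1}` (0-indexed: `t (i-1)` and `t i`) are swapped;
for `i = 0`, `t_1` is replaced by `-t_1` and `Q_r(x) ↦ Q_r(-t_1, x)`, i.e. `-t_1` is prepended
to the `x`-variables. -/
def thetaST (i k N : ℕ) (x z t : ℕ → R) (l r : ℤ) : R :=
  if i = 0 then
    theta k (N + 1) (fun j => if j = 0 then -(t 0) else x (j - 1)) z
      (Function.update t 0 (-(t 0))) l r
  else
    theta k N x z (t ∘ Equiv.swap (i - 1) i) l r

/-!
Everything happens at the level of generating functions: `ϑ_r^{(l)}` is the coefficient of `u^r`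
in `f_l(u) = Q(u)·Z(u)·T_l(u)`, and `s_i^t` only touches the `t`-factor `T_l` (and, for `i = 0`,
the `Q`-factor). For `i ≥ 1` the swap `t_i ↔ t_{i+1}` permutes the factors of `T_l` unless
exactly one of `t_i, t_{i+1}` occurs in it, i.e. `l = ±i`; then it turns `T_i` into
`T_{i-1}·(1 - t_{i+1}u)` and `T_{-i}` into `T_{-i-1}·(1 + t_i u)`. For `i = 0`, prepending `-t_1`
to the `x`'s multiplies `f_l` by `(1 - t_1 u)/(1 + t_1 u)`, which exactly undoes the sign change
of `t_1` in `T_l` unless `l = 0`. Finally `[u^r] F·(1 - c u) = [u^r] F - c·[u^{r-1}] F`.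
-/

open PowerSeries

lemma geomSeries_mul_one_sub (a : R) : geomSeries a * (1 - C a * X) = 1 := by
  ext (_ | n) <;> simp [geomSeries, mul_sub, ← mul_assoc, coeff_succ_mul_X, pow_succ]

lemma geomSeries_neg_mul_one_add (a : R) : geomSeries (-a) * (1 + C a * X) = 1 := by
  simpa using geomSeries_mul_one_sub (-a)

def coeffZ (F : PowerSeries R) (r : ℤ) : R :=
  if r < 0 then 0 else coeff r.toNat F

lemma coeffZ_mul_one_sub_C_mul_X (F : PowerSeries R) (c : R) (r : ℤ) :
    coeffZ (F * (1 - C c * X)) r = coeffZ F r - c * coeffZ F (r - 1) := by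
  rcases lt_trichotomy r 0 with hr | rfl | hr
  · simp [coeffZ, hr, show r - 1 < 0 by omega]
  · simp [coeffZ]
  · lift r to ℕ using hr.le
    obtain ⟨m, rfl⟩ := Nat.exists_eq_add_one_of_ne_zero (by omega : r ≠ 0)
    simp [coeffZ, mul_sub, mul_left_comm F, coeff_succ_mul_X, show ¬((m : ℤ) + 1 < 0) by omega]

lemma coeffZ_mul_one_add_C_mul_X (F : PowerSeries R) (c : R) (r : ℤ) :
    coeffZ (F * (1 + C c * X)) r = coeffZ F r + c * coeffZ F (r - 1) := by
  simpa using coeffZ_mul_one_sub_C_mul_X F (-c) r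

section ProdSwap

variable {M : Type*} [CommMonoid M] (g : ℕ → M) (m : ℕ)

lemma prod_range_comp_swap_of_ne {n : ℕ} (hn : n ≠ m + 1) :
    ∏ j ∈ range n, g (Equiv.swap m (m + 1) j) = ∏ j ∈ range n, g j := by
  rcases lt_or_gt_of_ne hn with hlt | hgt
  · refine prod_congr rfl fun j hj => ?_
    rw [mem_range] at hj
    rw [Equiv.swap_apply_of_ne_of_ne (by omega) (by omega)]
  · refine Equiv.Perm.prod_comp _ _ _ fun j hj => ?_
    have : j = m ∨ j = m + 1 := by
      by_contra! h
      exact hj (Equiv.swap_apply_of_ne_of_ne h.1 h.2)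
    simp only [coe_range, Set.mem_Iio]
    omega

lemma prod_range_succ_comp_swap :
    ∏ j ∈ range (m + 1), g (Equiv.swap m (m + 1) j) = (∏ j ∈ range m, g j) * g (m + 1) := by
  rw [prod_range_succ, Equiv.swap_apply_left, prod_range_comp_swap_of_ne g m (by omega)]

end ProdSwap

def xFactor (N : ℕ) (x : ℕ → R) : PowerSeries R :=
  ∏ i ∈ range N, ((1 + C (x i) * X) * geomSeries (x i))

def zFactor (k : ℕ) (z : ℕ → R) : PowerSeries R :=
  ∏ i ∈ range k, (1 + C (z i) * X)

def tFactor (t : ℕ → R) (l : ℤ) : PowerSeries R :=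
  if 0 ≤ l then ∏ i ∈ range l.toNat, (1 - C (t i) * X)
  else ∏ i ∈ range (-l).toNat, geomSeries (-(t i))

lemma thetaGF_eq (k N : ℕ) (x z t : ℕ → R) (l : ℤ) :
    thetaGF k N x z t l = xFactor N x * zFactor k z * tFactor t l := rfl

lemma xFactor_succ_cons (N : ℕ) (x : ℕ → R) (c : R) :
    xFactor (N + 1) (fun j => if j = 0 then c else x (j - 1))
      = (1 + C c * X) * geomSeries c * xFactor N x := by
  simp [xFactor, prod_range_succ', mul_comm]

lemma tFactor_zero (t : ℕ → R) : tFactor t 0 = 1 := by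
  simp [tFactor]

lemma tFactor_of_pos (t : ℕ → R) {l : ℤ} (hl : 0 < l) :
    tFactor t l = (1 - C (t 0) * X) * tFactor (fun j => t (j + 1)) (l - 1) := by
  rw [tFactor, tFactor, if_pos hl.le, if_pos (by omega), show l.toNat = (l - 1).toNat + 1 by omega,
    prod_range_succ', mul_comm]

lemma tFactor_of_neg (t : ℕ → R) {l : ℤ} (hl : l < 0) :
    tFactor t l = geomSeries (-(t 0)) * tFactor (fun j => t (j + 1)) (l + 1) := by
  obtain rfl | hl' := eq_or_lt_of_le (show l ≤ -1 by omega)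
  · simp [tFactor]
  rw [tFactor, tFactor, if_neg (by omega), if_neg (by omega),
    show (-l).toNat = (-(l + 1)).toNat + 1 by omega, prod_range_succ', mul_comm]

section TFactorSwap

variable (t : ℕ → R) (m : ℕ)

lemma tFactor_comp_swap_of_ne {l : ℤ} (hl : l ≠ m + 1) (hl' : l ≠ -(m + 1)) :
    tFactor (t ∘ Equiv.swap m (m + 1)) l = tFactor t l := by
  unfold tFactor
  split_ifs
  · exact prod_range_comp_swap_of_ne (fun j => 1 - C (t j) * X) m (by omega)
  · exact prod_range_comp_swap_of_ne (fun j => geomSeries (-(t j))) m (by omega)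

lemma tFactor_comp_swap_succ :
    tFactor (t ∘ Equiv.swap m (m + 1)) (m + 1) = tFactor t m * (1 - C (t (m + 1)) * X) := by
  rw [tFactor, tFactor, if_pos (by omega), if_pos (by omega),
    show ((m : ℤ) + 1).toNat = m + 1 by omega, Int.toNat_natCast]
  exact prod_range_succ_comp_swap (fun j => 1 - C (t j) * X) m

lemma tFactor_comp_swap_neg_succ :
    tFactor (t ∘ Equiv.swap m (m + 1)) (-(m + 1))
      = tFactor t (-(m + 1) - 1) * (1 + C (t m) * X) := by
  rw [tFactor, tFactor, if_neg (by omega), if_neg (by omega),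
    show (-(-((m : ℤ) + 1))).toNat = m + 1 by omega,
    show (-(-((m : ℤ) + 1) - 1)).toNat = m + 1 + 1 by omega, Function.comp_def,
    prod_range_succ_comp_swap (fun j => geomSeries (-(t j))) m, prod_range_succ, prod_range_succ]
  linear_combination -(∏ j ∈ range m, geomSeries (-(t j))) * geomSeries (-(t (m + 1))) *
    geomSeries_neg_mul_one_add (t m)

end TFactorSwap

lemma tFactor_update_zero_neg_of_ne (t : ℕ → R) {l : ℤ} (hl : l ≠ 0) :
    (1 - C (t 0) * X) * geomSeries (-(t 0)) * tFactor (Function.update t 0 (-(t 0))) l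
      = tFactor t l := by
  have htail : (fun j => Function.update t 0 (-(t 0)) (j + 1)) = fun j => t (j + 1) := by
    ext j; exact Function.update_of_ne j.succ_ne_zero _ _
  rcases lt_or_gt_of_ne hl with hneg | hpos
  · rw [tFactor_of_neg _ hneg, tFactor_of_neg _ hneg, htail, Function.update_self, neg_neg]
    linear_combination geomSeries (-(t 0)) * tFactor (fun j => t (j + 1)) (l + 1) *
      geomSeries_mul_one_sub (t 0)
  · rw [tFactor_of_pos _ hpos, tFactor_of_pos _ hpos, htail, Function.update_self, map_neg,
      neg_mul, sub_neg_eq_add]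
    linear_combination (1 - C (t 0) * X) * tFactor (fun j => t (j + 1)) (l - 1) *
      geomSeries_neg_mul_one_add (t 0)

section Theta

variable (k N : ℕ) (x z t : ℕ → R)

lemma thetaGF_cons_neg_update_of_ne {l : ℤ} (hl : l ≠ 0) :
    thetaGF k (N + 1) (fun j => if j = 0 then -(t 0) else x (j - 1)) z
      (Function.update t 0 (-(t 0))) l = thetaGF k N x z t l := by
  rw [thetaGF_eq, thetaGF_eq, xFactor_succ_cons, ← tFactor_update_zero_neg_of_ne t hl, map_neg,
    neg_mul, ← sub_eq_add_neg]
  ring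

lemma thetaGF_cons_neg_update_zero :
    thetaGF k (N + 1) (fun j => if j = 0 then -(t 0) else x (j - 1)) z
      (Function.update t 0 (-(t 0))) 0 = thetaGF k N x z t (-1) * (1 - C (t 0) * X) := by
  rw [thetaGF_eq, thetaGF_eq, xFactor_succ_cons, tFactor_of_neg t (by norm_num), neg_add_cancel,
    tFactor_zero, tFactor_zero, map_neg, neg_mul, ← sub_eq_add_neg]
  ring

lemma thetaGF_comp_swap_of_ne (m : ℕ) {l : ℤ} (hl : l ≠ m + 1) (hl' : l ≠ -(m + 1)) :
    thetaGF k N x z (t ∘ Equiv.swap m (m + 1)) l = thetaGF k N x z t l := by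
  rw [thetaGF_eq, thetaGF_eq, tFactor_comp_swap_of_ne t m hl hl']

lemma thetaGF_comp_swap_succ (m : ℕ) :
    thetaGF k N x z (t ∘ Equiv.swap m (m + 1)) (m + 1)
      = thetaGF k N x z t m * (1 - C (t (m + 1)) * X) := by
  rw [thetaGF_eq, thetaGF_eq, tFactor_comp_swap_succ]
  ring

lemma thetaGF_comp_swap_neg_succ (m : ℕ) :
    thetaGF k N x z (t ∘ Equiv.swap m (m + 1)) (-(m + 1))
      = thetaGF k N x z t (-(m + 1) - 1) * (1 + C (t m) * X) := by
  rw [thetaGF_eq, thetaGF_eq, tFactor_comp_swap_neg_succ]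
  ring

end Theta

lemma theta_eq_coeffZ (k N : ℕ) (x z t : ℕ → R) (l r : ℤ) :
    theta k N x z t l r = coeffZ (thetaGF k N x z t l) r := rfl

lemma thetaST_succ (m k N : ℕ) (x z t : ℕ → R) (l r : ℤ) :
    thetaST (m + 1) k N x z t l r = theta k N x z (t ∘ Equiv.swap m (m + 1)) l r := rfl

/-- Lemma 5.4 of Ikeda–Matsumura. -/
theorem sT_action_on_theta (k N : ℕ) (x z t : ℕ → R) :
    -- (a) `s_i^t(ϑ_r^{(l)}) = ϑ_r^{(l)}` for `l ≠ ±i`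
    (∀ i : ℕ, ∀ l r : ℤ, l ≠ (i : ℤ) → l ≠ -(i : ℤ) →
      thetaST i k N x z t l r = theta k N x z t l r) ∧
    -- (b) `s_i^t(ϑ_r^{(i)}) = ϑ_r^{(i-1)} − t_{i+1}·ϑ_{r-1}^{(i-1)}` for `i ≥ 0`
    (∀ i : ℕ, ∀ r : ℤ,
      thetaST i k N x z t i r
        = theta k N x z t ((i : ℤ) - 1) r - t i * theta k N x z t ((i : ℤ) - 1) (r - 1)) ∧
    -- (c) `s_i^t(ϑ_r^{(-i)}) = ϑ_r^{(-i-1)} + t_i·ϑ_{r-1}^{(-i-1)}` for `i > 0`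
    (∀ i : ℕ, 0 < i → ∀ r : ℤ,
      thetaST i k N x z t (-(i : ℤ)) r
        = theta k N x z t (-(i : ℤ) - 1) r
            + t (i - 1) * theta k N x z t (-(i : ℤ) - 1) (r - 1)) := by
  refine ⟨fun i l r hl hl' => ?_, fun i r => ?_, fun i hi r => ?_⟩
  · rcases i with _ | m
    · rw [thetaST, if_pos rfl, theta_eq_coeffZ,
        thetaGF_cons_neg_update_of_ne k N x z t (by exact_mod_cast hl), theta_eq_coeffZ]
    · push_cast at hl hl'
      rw [thetaST_succ, theta_eq_coeffZ, thetaGF_comp_swap_of_ne k N x z t m hl hl',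
        theta_eq_coeffZ]
  · rcases i with _ | m
    · rw [thetaST, if_pos rfl, theta_eq_coeffZ, Nat.cast_zero, thetaGF_cons_neg_update_zero,
        coeffZ_mul_one_sub_C_mul_X, zero_sub, theta_eq_coeffZ, theta_eq_coeffZ]
    · rw [thetaST_succ, theta_eq_coeffZ, Nat.cast_succ, thetaGF_comp_swap_succ,
        coeffZ_mul_one_sub_C_mul_X, add_sub_cancel_right, theta_eq_coeffZ, theta_eq_coeffZ]
  · obtain ⟨m, rfl⟩ := Nat.exists_eq_add_one_of_ne_zero hi.ne'
    rw [thetaST_succ, theta_eq_coeffZ, Nat.cast_succ, thetaGF_comp_swap_neg_succ,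
      coeffZ_mul_one_add_C_mul_X, Nat.add_sub_cancel, theta_eq_coeffZ, theta_eq_coeffZ]

end
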